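/- (Interaction regression, general decomposition.) Assume positivity and that the (2K+1)×(2K+1) covariance matrix of (D,A,AD) is positive definite. Then the interaction-regression slope satisfies Δ_inter = Σ_{a∈𝒜} ω_dce^i(a)·E[Y(1,a)−Y(0,a) | D=1, A=a] + Σ_{a∈𝒜} ω_ind^i(a)·(E[Y(0,a) | D=0, A=a] − E[Y(0,0) | D=0, A=0]) + Σ_{a∈𝒜} ω_dce^i(a)·(E[Y(0,a) | D=1, A=a] − E[Y(0,a) | D=0, A=a]). -/

import Mathlib

open MeasureTheory ProbabilityTheory BigOperators

noncomputable section

variable {Ω : Type} [MeasurableSpace Ω] {K : ℕ}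

/-- Expectation of a real-valued random variable. -/
def Exp (P : Measure Ω) (Z : Ω → ℝ) : ℝ := ∫ ω, Z ω ∂P

/-- Probability of an event, as a real number. -/
def Pr (P : Measure Ω) (s : Set Ω) : ℝ := (P s).toReal

/-- Conditional expectation given an event, defined as a ratio. -/
def CE (P : Measure Ω) (Z : Ω → ℝ) (s : Set Ω) : ℝ :=
  Exp P (fun ω => Z ω * s.indicator (fun _ => (1:ℝ)) ω) / Pr P s

/-- Covariance of two real-valued random variables. -/
def Cov (P : Measure Ω) (Z W : Ω → ℝ) : ℝ :=
  Exp P (fun ω => Z ω * W ω) - Exp P Z * Exp P W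

/-- The event {D = d, A = a}. -/
def evDA (D : Ω → ℕ) (A : Ω → Fin K → ℕ) (d : ℕ) (a : Fin K → ℕ) : Set Ω :=
  {ω | D ω = d ∧ A ω = a}

/-- The event {D = d}. -/
def evD (D : Ω → ℕ) (d : ℕ) : Set Ω := {ω | D ω = d}

/-- The event {A = a}. -/
def evA (A : Ω → Fin K → ℕ) (a : Fin K → ℕ) : Set Ω := {ω | A ω = a}

/-- π_d(a) = P(A = a | D = d). -/
def piP (P : Measure Ω) (D : Ω → ℕ) (A : Ω → Fin K → ℕ) (d : ℕ) (a : Fin K → ℕ) : ℝ :=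
  Pr P (evDA D A d a) / Pr P (evD D d)

/-- The observed outcome Y = Σ_{(d,a)} Y(d,a)·1{D=d, A=a}. -/
def Yobs (D : Ω → ℕ) (A : Ω → Fin K → ℕ) (𝒜 : Finset (Fin K → ℕ))
    (Ypot : ℕ → (Fin K → ℕ) → Ω → ℝ) : Ω → ℝ :=
  fun ω => ∑ d ∈ ({0, 1} : Finset ℕ), ∑ a ∈ 𝒜,
    Ypot d a ω * (if D ω = d ∧ A ω = a then (1:ℝ) else 0)

/-- μ(d,a) = E[Y(d,a)]. -/
def muP (P : Measure Ω) (Ypot : ℕ → (Fin K → ℕ) → Ω → ℝ) (d : ℕ) (a : Fin K → ℕ) : ℝ :=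
  Exp P (Ypot d a)

/-- The random vector (D, A) as a real-valued family indexed by Unit ⊕ Fin K. -/
def DAvec (D : Ω → ℕ) (A : Ω → Fin K → ℕ) : Unit ⊕ Fin K → Ω → ℝ :=
  Sum.elim (fun _ ω => (D ω : ℝ)) (fun j ω => (A ω j : ℝ))

/-- The (K+1)×(K+1) covariance matrix of (D, A). -/
def covDAmat (P : Measure Ω) (D : Ω → ℕ) (A : Ω → Fin K → ℕ) :
    Matrix (Unit ⊕ Fin K) (Unit ⊕ Fin K) ℝ :=
  Matrix.of fun i j => Cov P (DAvec D A i) (DAvec D A j)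

/-- The K×K covariance matrix Var(A). -/
def varAmat (P : Measure Ω) (A : Ω → Fin K → ℕ) : Matrix (Fin K) (Fin K) ℝ :=
  Matrix.of fun i j => Cov P (fun ω => (A ω i : ℝ)) (fun ω => (A ω j : ℝ))

/-- The row vector Cov(D, A). -/
def covDA (P : Measure Ω) (D : Ω → ℕ) (A : Ω → Fin K → ℕ) : Fin K → ℝ :=
  fun j => Cov P (fun ω => (D ω : ℝ)) (fun ω => (A ω j : ℝ))

/-- M = Cov(D,A) ⬝ Var(A)⁻¹. -/
def Mlong (P : Measure Ω) (D : Ω → ℕ) (A : Ω → Fin K → ℕ) : Fin K → ℝ :=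
  fun j => ∑ i, covDA P D A i * (varAmat P A)⁻¹ i j

/-- Var(D). -/
def varD (P : Measure Ω) (D : Ω → ℕ) : ℝ :=
  Cov P (fun ω => (D ω : ℝ)) (fun ω => (D ω : ℝ))

/-- denom = Var(D) − Cov(D,A)·Var(A)⁻¹·Cov(A,D). -/
def denomL (P : Measure Ω) (D : Ω → ℕ) (A : Ω → Fin K → ℕ) : ℝ :=
  varD P D - ∑ j, Mlong P D A j * covDA P D A j

/-- The long-regression weight ω_dce^l(a). -/
def wdceL (P : Measure Ω) (D : Ω → ℕ) (A : Ω → Fin K → ℕ) (a : Fin K → ℕ) : ℝ :=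
  piP P D A 1 a *
    (varD P D - Pr P (evD D 1) *
      ∑ j, Mlong P D A j * ((a j : ℝ) - Exp P (fun ω => (A ω j : ℝ)))) / denomL P D A

/-- The long-regression weight ω_ind^l(a). -/
def windL (P : Measure Ω) (D : Ω → ℕ) (A : Ω → Fin K → ℕ) (a : Fin K → ℕ) : ℝ :=
  (varD P D * (piP P D A 1 a - piP P D A 0 a) -
    Pr P (evA A a) * ∑ j, Mlong P D A j * ((a j : ℝ) - Exp P (fun ω => (A ω j : ℝ))))
  / denomL P D A

/-- The residual of the long regression of Y on (1, D, A). -/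
def residLong (D : Ω → ℕ) (A : Ω → Fin K → ℕ) (𝒜 : Finset (Fin K → ℕ))
    (Ypot : ℕ → (Fin K → ℕ) → Ω → ℝ) (Δ θ₀ : ℝ) (θ : Fin K → ℝ) : Ω → ℝ :=
  fun ω => Yobs D A 𝒜 Ypot ω - Δ * (D ω : ℝ) - θ₀ - ∑ j, θ j * (A ω j : ℝ)

/-- The random vector W = (A, A·D) as a real-valued family indexed by Fin K ⊕ Fin K. -/
def Wvec (D : Ω → ℕ) (A : Ω → Fin K → ℕ) : Fin K ⊕ Fin K → Ω → ℝ :=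
  Sum.elim (fun j ω => (A ω j : ℝ)) (fun j ω => (A ω j : ℝ) * (D ω : ℝ))

/-- The 2K×2K covariance matrix Var(W), W = (A, AD). -/
def varWmat (P : Measure Ω) (D : Ω → ℕ) (A : Ω → Fin K → ℕ) :
    Matrix (Fin K ⊕ Fin K) (Fin K ⊕ Fin K) ℝ :=
  Matrix.of fun u v => Cov P (Wvec D A u) (Wvec D A v)

/-- The row vector Cov(D, W). -/
def covDW (P : Measure Ω) (D : Ω → ℕ) (A : Ω → Fin K → ℕ) : Fin K ⊕ Fin K → ℝ :=
  fun u => Cov P (fun ω => (D ω : ℝ)) (Wvec D A u)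

/-- M = Cov(D,W) ⬝ Var(W)⁻¹ for the interaction regression. -/
def Minter (P : Measure Ω) (D : Ω → ℕ) (A : Ω → Fin K → ℕ) : Fin K ⊕ Fin K → ℝ :=
  fun v => ∑ u, covDW P D A u * (varWmat P D A)⁻¹ u v

/-- denom = Var(D) − M·Cov(W,D) for the interaction regression. -/
def denomI (P : Measure Ω) (D : Ω → ℕ) (A : Ω → Fin K → ℕ) : ℝ :=
  varD P D - ∑ v, Minter P D A v * covDW P D A v

/-- E[A_j | D = 1]. -/
def condA1 (P : Measure Ω) (D : Ω → ℕ) (A : Ω → Fin K → ℕ) (j : Fin K) : ℝ :=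
  CE P (fun ω => (A ω j : ℝ)) (evD D 1)

/-- The random vector (D, A, AD) as a real-valued family. -/
def DADvec (D : Ω → ℕ) (A : Ω → Fin K → ℕ) : Unit ⊕ (Fin K ⊕ Fin K) → Ω → ℝ :=
  Sum.elim (fun _ ω => (D ω : ℝ)) (Wvec D A)

/-- The (2K+1)×(2K+1) covariance matrix of (D, A, AD). -/
def covDADmat (P : Measure Ω) (D : Ω → ℕ) (A : Ω → Fin K → ℕ) :
    Matrix (Unit ⊕ (Fin K ⊕ Fin K)) (Unit ⊕ (Fin K ⊕ Fin K)) ℝ :=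
  Matrix.of fun i j => Cov P (DADvec D A i) (DADvec D A j)

/-- The interaction-regression weight ω_dce^i(a). -/
def wdceI (P : Measure Ω) (D : Ω → ℕ) (A : Ω → Fin K → ℕ) (a : Fin K → ℕ) : ℝ :=
  piP P D A 1 a *
    (varD P D
      - Pr P (evD D 1) *
          ∑ j, Minter P D A (Sum.inl j) * ((a j : ℝ) - Exp P (fun ω => (A ω j : ℝ)))
      - Pr P (evD D 1) *
          ∑ j, Minter P D A (Sum.inr j) * ((a j : ℝ) - Pr P (evD D 1) * condA1 P D A j))
  / denomI P D A

/-- The interaction-regression weight ω_ind^i(a). -/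
def windI (P : Measure Ω) (D : Ω → ℕ) (A : Ω → Fin K → ℕ) (a : Fin K → ℕ) : ℝ :=
  (varD P D * (piP P D A 1 a - piP P D A 0 a)
    - ∑ j, Minter P D A (Sum.inl j) * Pr P (evA A a) * ((a j : ℝ) - Exp P (fun ω => (A ω j : ℝ)))
    - Pr P (evD D 1) *
        ∑ j, Minter P D A (Sum.inr j) *
          (piP P D A 1 a * (a j : ℝ) - Pr P (evA A a) * condA1 P D A j))
  / denomI P D A

/-- The residual of the interaction regression of Y on (1, D, A, AD). -/
def residInter (D : Ω → ℕ) (A : Ω → Fin K → ℕ) (𝒜 : Finset (Fin K → ℕ))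
    (Ypot : ℕ → (Fin K → ℕ) → Ω → ℝ) (Δ θ₀ : ℝ) (θ lam : Fin K → ℝ) : Ω → ℝ :=
  fun ω => Yobs D A 𝒜 Ypot ω - Δ * (D ω : ℝ) - θ₀ - (∑ j, θ j * (A ω j : ℝ))
    - ∑ j, lam j * (A ω j : ℝ) * (D ω : ℝ)

/-- P(D = d | A = a). -/
def condDgivenA (P : Measure Ω) (D : Ω → ℕ) (A : Ω → Fin K → ℕ) (d : ℕ) (a : Fin K → ℕ) : ℝ :=
  Pr P (evDA D A d a) / Pr P (evA A a)

/-- The SFE weight ω_sfe(a). -/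
def wsfe (P : Measure Ω) (D : Ω → ℕ) (A : Ω → Fin K → ℕ) (𝒜 : Finset (Fin K → ℕ))
    (a : Fin K → ℕ) : ℝ :=
  condDgivenA P D A 1 a * condDgivenA P D A 0 a * Pr P (evA A a) /
    ∑ a' ∈ 𝒜, condDgivenA P D A 1 a' * condDgivenA P D A 0 a' * Pr P (evA A a')

/-- The residual of the SFE regression of Y on (D, {1{A=a}}). -/
def residSFE (D : Ω → ℕ) (A : Ω → Fin K → ℕ) (𝒜 : Finset (Fin K → ℕ))
    (Ypot : ℕ → (Fin K → ℕ) → Ω → ℝ) (Δ : ℝ) (θ : (Fin K → ℕ) → ℝ) : Ω → ℝ :=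
  fun ω => Yobs D A 𝒜 Ypot ω - Δ * (D ω : ℝ) -
    ∑ a ∈ 𝒜, θ a * (if A ω = a then (1:ℝ) else 0)

/-- The residual of the saturated regression of Y on ({1{A=a}}, {D·1{A=a}}). -/
def residSAT (D : Ω → ℕ) (A : Ω → Fin K → ℕ) (𝒜 : Finset (Fin K → ℕ))
    (Ypot : ℕ → (Fin K → ℕ) → Ω → ℝ) (γ Δsat : (Fin K → ℕ) → ℝ) : Ω → ℝ :=
  fun ω => Yobs D A 𝒜 Ypot ω - (∑ a ∈ 𝒜, γ a * (if A ω = a then (1:ℝ) else 0)) -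
    ∑ a ∈ 𝒜, Δsat a * (D ω : ℝ) * (if A ω = a then (1:ℝ) else 0)

/-!
The interaction regression is the regression of `Y` on `(1, D, W)` with `W = (A, A·D)`, so by
Frisch–Waugh–Lovell its `D`-coefficient is `Δ = E[Y D̃] / E[D D̃]`, where
`D̃ = D - E D - M (W - E W)` is `D` with `(1, W)` partialled out, and `E[D D̃]` is the Schur
complement `Var D - Cov(D, W) Var(W)⁻¹ Cov(W, D)`, positive because the covariance matrix of
`(D, W)` is positive definite. All regressors are functions of the finitely-valued cell `(D, A)`,
so `E[Y D̃] = Σ_{d,a} D̃(d, a) E[Y(d, a) 1{D = d, A = a}]`. The weights are cell averages of `D̃`: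
`ω_dce(a) = E[D̃ 1{D = 1, A = a}] / E[D D̃]` and `ω_ind(a) = E[D̃ 1{A = a}] / E[D D̃]`. The latter
sum to `E[D̃] = 0`, which removes the baseline `E[Y(0,0) | D = 0, A = 0]`, and regrouping the
conditional means gives the three terms.
-/

open Matrix

section Residualization

variable {V ι : Type*} [CommRing V] [Algebra ℝ V] [Fintype ι] (E : V →ₗ[ℝ] ℝ)

def linCov (f g : V) : ℝ := E (f * g) - E f * E g

lemma linCov_comm (f g : V) : linCov E f g = linCov E g f := by
  simp only [linCov, mul_comm]

def partialOut (z : V) (w : ι → V) (M : ι → ℝ) : V :=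
  z - algebraMap ℝ V (E z) - ∑ u, M u • (w u - algebraMap ℝ V (E (w u)))

variable {E} {z : V} {w : ι → V} {M : ι → ℝ}

lemma apply_partialOut_mul (g : V) :
    E (partialOut E z w M * g) = linCov E z g - ∑ u, M u * linCov E (w u) g := by
  simp only [partialOut, linCov, sub_mul, Finset.sum_mul, smul_mul_assoc, ← Algebra.smul_def,
    map_sub, map_sum, map_smul, smul_eq_mul]

lemma apply_partialOut (hE : E 1 = 1) : E (partialOut E z w M) = 0 := by
  simpa [linCov, hE] using apply_partialOut_mul (E := E) (z := z) (w := w) (M := M) 1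

lemma apply_partialOut_mul_eq_zero
    (hM : ∀ v, ∑ u, M u * linCov E (w u) (w v) = linCov E z (w v)) (v : ι) :
    E (partialOut E z w M * w v) = 0 := by
  rw [apply_partialOut_mul, hM, sub_self]

lemma apply_partialOut_eq_of_eq {F G : V →ₗ[ℝ] ℝ} (h1 : F 1 = G 1) (hz : F z = G z)
    (hw : ∀ u, F (w u) = G (w u)) : F (partialOut E z w M) = G (partialOut E z w M) := by
  simp only [partialOut, map_sub, map_sum, map_smul, Algebra.algebraMap_eq_smul_one, h1, hz, hw]

theorem frisch_waugh_lovell (hE : E 1 = 1)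
    (hM : ∀ v, ∑ u, M u * linCov E (w u) (w v) = linCov E z (w v))
    {F : V →ₗ[ℝ] ℝ} (Δ θ₀ : ℝ) (β : ι → ℝ)
    (hF1 : F 1 = E (Δ • z + algebraMap ℝ V θ₀ + ∑ u, β u • w u))
    (hFz : F z = E ((Δ • z + algebraMap ℝ V θ₀ + ∑ u, β u • w u) * z))
    (hFw : ∀ v, F (w v) = E ((Δ • z + algebraMap ℝ V θ₀ + ∑ u, β u • w u) * w v)) :
    F (partialOut E z w M) = Δ * (linCov E z z - ∑ u, M u * linCov E (w u) z) := by
  set fit := Δ • z + algebraMap ℝ V θ₀ + ∑ u, β u • w u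
  have hFG : F (partialOut E z w M) = (E ∘ₗ LinearMap.mulLeft ℝ fit) (partialOut E z w M) :=
    apply_partialOut_eq_of_eq (by simpa using hF1) hFz hFw
  rw [hFG, LinearMap.comp_apply, LinearMap.mulLeft_apply, mul_comm, ← apply_partialOut_mul]
  simp only [fit, mul_add, Finset.mul_sum, mul_smul_comm, mul_comm _ (algebraMap ℝ V θ₀),
    ← Algebra.smul_def, map_add, map_sum, map_smul, smul_eq_mul, apply_partialOut hE,
    apply_partialOut_mul_eq_zero hM, mul_zero, add_zero, Finset.sum_const_zero]

end Residualization

theorem Matrix.PosDef.schur_complement₂₂ {m n 𝕜 : Type*} [Fintype m] [Fintype n] [DecidableEq n]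
    [Field 𝕜] [PartialOrder 𝕜] [StarRing 𝕜] {M : Matrix (m ⊕ n) (m ⊕ n) 𝕜} (hM : M.PosDef) :
    (M.toBlocks₁₁ - M.toBlocks₁₂ * M.toBlocks₂₂⁻¹ * M.toBlocks₂₁).PosDef := by
  have hD : M.toBlocks₂₂.PosDef := hM.submatrix Sum.inr_injective
  have := hD.isUnit.invertible
  have h21 : M.toBlocks₂₁ = M.toBlocks₁₂ᴴ := (congrArg toBlocks₂₁ hM.isHermitian).symm
  rw [h21]
  refine .of_dotProduct_mulVec_pos ?_ fun x hx => ?_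
  · exact (hM.isHermitian.submatrix Sum.inl).sub
      (isHermitian_mul_mul_conjTranspose _ hD.isHermitian.inv)
  · -- `y` makes the `toBlocks₂₂` term of `schur_complement_eq₂₂` vanish
    set y := -((M.toBlocks₂₂⁻¹ * M.toBlocks₁₂ᴴ) *ᵥ x)
    have hxy : Sum.elim x y ≠ 0 := fun h => hx (funext fun i => congrFun h (Sum.inl i))
    have hpos := hM.dotProduct_mulVec_pos hxy
    rw [← fromBlocks_toBlocks M, dotProduct_mulVec, h21,
      schur_complement_eq₂₂ _ _ _ _ hD.isHermitian] at hpos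
    simpa [y, dotProduct_mulVec] using hpos

section CellMoment

variable {Ω α : Type*} {X : Ω → α} {S : Finset α}

lemma mul_comp_eq_sum_indicator (hS : ∀ ω, X ω ∈ S) (Z : Ω → ℝ) (g : α → ℝ) (ω : Ω) :
    Z ω * g (X ω) = ∑ x ∈ S, (X ⁻¹' {x}).indicator (fun ω => g x * Z ω) ω := by
  rw [Finset.sum_eq_single_of_mem (X ω) (hS ω) fun x _ hx =>
    Set.indicator_of_notMem (fun h => hx h.symm) _,
    Set.indicator_of_mem (show ω ∈ X ⁻¹' {X ω} from rfl), mul_comm]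

variable [MeasurableSpace Ω] {P : Measure Ω}

def cellMoment (P : Measure Ω) (X : Ω → α) (S : Finset α) (Z : Ω → ℝ) :
    (α → ℝ) →ₗ[ℝ] ℝ where
  toFun g := ∑ x ∈ S, g x * ∫ ω in X ⁻¹' {x}, Z ω ∂P
  map_add' f g := by simp only [Pi.add_apply, add_mul, Finset.sum_add_distrib]
  map_smul' c g := by simp only [Pi.smul_apply, smul_eq_mul, mul_assoc, ← Finset.mul_sum,
    RingHom.id_apply]

lemma cellMoment_apply (Z : Ω → ℝ) (g : α → ℝ) :
    cellMoment P X S Z g = ∑ x ∈ S, g x * ∫ ω in X ⁻¹' {x}, Z ω ∂P := rfl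

variable [MeasurableSpace α] [MeasurableSingletonClass α]

lemma integrable_mul_comp (hX : Measurable X) (hS : ∀ ω, X ω ∈ S) {Z : Ω → ℝ}
    (hZ : Integrable Z P) (g : α → ℝ) : Integrable (fun ω => Z ω * g (X ω)) P := by
  simp_rw [mul_comp_eq_sum_indicator hS]
  exact integrable_finsetSum _ fun x _ =>
    (hZ.const_mul _).indicator (hX (measurableSet_singleton x))

lemma integral_mul_comp_eq_cellMoment (hX : Measurable X) (hS : ∀ ω, X ω ∈ S) {Z : Ω → ℝ}
    (hZ : Integrable Z P) (g : α → ℝ) :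
    ∫ ω, Z ω * g (X ω) ∂P = cellMoment P X S Z g := by
  simp_rw [mul_comp_eq_sum_indicator hS]
  rw [integral_finsetSum _ fun x _ =>
    (hZ.const_mul _).indicator (hX (measurableSet_singleton x))]
  simp only [integral_indicator (hX (measurableSet_singleton _)), integral_const_mul,
    cellMoment_apply]

lemma integral_comp_eq_cellMoment [IsFiniteMeasure P] (hX : Measurable X) (hS : ∀ ω, X ω ∈ S)
    (g : α → ℝ) : ∫ ω, g (X ω) ∂P = cellMoment P X S 1 g := by
  simpa using integral_mul_comp_eq_cellMoment hX hS (Z := 1) (integrable_const 1) g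

lemma cellMoment_one_one [IsProbabilityMeasure P] (hX : Measurable X) (hS : ∀ ω, X ω ∈ S) :
    cellMoment P X S 1 1 = 1 := by
  rw [← integral_comp_eq_cellMoment hX hS]
  simp

lemma integral_sub_comp_mul_comp_eq [IsFiniteMeasure P] (hX : Measurable X)
    (hS : ∀ ω, X ω ∈ S) {Z : Ω → ℝ} (hZ : Integrable Z P) (h g : α → ℝ) :
    ∫ ω, (Z ω - h (X ω)) * g (X ω) ∂P = cellMoment P X S Z g - cellMoment P X S 1 (h * g) := by
  simp_rw [sub_mul]
  rw [integral_sub (integrable_mul_comp hX hS hZ g)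
    ((integrable_mul_comp hX hS (integrable_const 1) (h * g)).congr (by simp)),
    integral_mul_comp_eq_cellMoment hX hS hZ, ← integral_comp_eq_cellMoment hX hS]
  rfl

end CellMoment

lemma Cov_comm (P : Measure Ω) (Z W : Ω → ℝ) : Cov P Z W = Cov P W Z := by
  simp only [Cov, mul_comm]

lemma Cov_comp {α : Type*} [MeasurableSpace α] [MeasurableSingletonClass α] {P : Measure Ω}
    [IsFiniteMeasure P] {X : Ω → α} {S : Finset α} (hX : Measurable X) (hS : ∀ ω, X ω ∈ S)
    (f g : α → ℝ) :
    Cov P (fun ω => f (X ω)) (fun ω => g (X ω)) = linCov (cellMoment P X S 1) f g := by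
  simp only [Cov, Exp, linCov, ← integral_comp_eq_cellMoment hX hS]
  rfl

lemma CE_eq_setIntegral (P : Measure Ω) (Z : Ω → ℝ) {s : Set Ω} (hs : MeasurableSet s) :
    CE P Z s = (∫ ω in s, Z ω ∂P) / Pr P s := by
  rw [CE, Exp, ← integral_indicator hs]
  congr 2
  ext ω
  by_cases h : ω ∈ s <;> simp [h]

section InteractionRegression

variable {P : Measure Ω} {D : Ω → ℕ} {A : Ω → Fin K → ℕ} {𝒜 : Finset (Fin K → ℕ)}
  {Ypot : ℕ → (Fin K → ℕ) → Ω → ℝ}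

def cellOf (D : Ω → ℕ) (A : Ω → Fin K → ℕ) : Ω → ℕ × (Fin K → ℕ) := fun ω => (D ω, A ω)

def dCell : ℕ × (Fin K → ℕ) → ℝ := fun x => x.1

def wCell : Fin K ⊕ Fin K → ℕ × (Fin K → ℕ) → ℝ :=
  Sum.elim (fun j x => x.2 j) (fun j x => x.2 j * x.1)

-- the residualized treatment `D̃` of the header, as a function of the cell `(D, A)`
def residTreat (P : Measure Ω) (D : Ω → ℕ) (A : Ω → Fin K → ℕ) (𝒜 : Finset (Fin K → ℕ)) :
    ℕ × (Fin K → ℕ) → ℝ :=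
  partialOut (cellMoment P (cellOf D A) (({0, 1} : Finset ℕ) ×ˢ 𝒜) 1) dCell wCell (Minter P D A)

def fitInter (Δ θ₀ : ℝ) (θ lam : Fin K → ℝ) : ℕ × (Fin K → ℕ) → ℝ :=
  Δ • dCell + algebraMap ℝ _ θ₀ + ∑ u, Sum.elim θ lam u • wCell u

omit [MeasurableSpace Ω] in
lemma Wvec_eq_comp (u : Fin K ⊕ Fin K) : Wvec D A u = fun ω => wCell u (cellOf D A ω) := by
  cases u <;> rfl

lemma measurable_cellOf (hD : Measurable D) (hA : Measurable A) : Measurable (cellOf D A) :=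
  hD.prodMk hA

omit [MeasurableSpace Ω] in
lemma cellOf_mem (hDbin : ∀ ω, D ω = 0 ∨ D ω = 1) (hAsupp : ∀ ω, A ω ∈ 𝒜) (ω : Ω) :
    cellOf D A ω ∈ ({0, 1} : Finset ℕ) ×ˢ 𝒜 := by
  rcases hDbin ω with h | h <;> simp [cellOf, h, hAsupp ω]

omit [MeasurableSpace Ω] in
lemma preimage_cellOf (d : ℕ) (a : Fin K → ℕ) : cellOf D A ⁻¹' {(d, a)} = evDA D A d a := by
  ext ω
  simp [cellOf, evDA]

lemma measurableSet_evDA (hD : Measurable D) (hA : Measurable A) (d : ℕ) (a : Fin K → ℕ) :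
    MeasurableSet (evDA D A d a) := by
  rw [← preimage_cellOf]
  exact measurable_cellOf hD hA (measurableSet_singleton _)

lemma cellMoment_cellOf_apply (Z : Ω → ℝ) (g : ℕ × (Fin K → ℕ) → ℝ) :
    cellMoment P (cellOf D A) (({0, 1} : Finset ℕ) ×ˢ 𝒜) Z g
      = ∑ a ∈ 𝒜, (g (0, a) * ∫ ω in evDA D A 0 a, Z ω ∂P
        + g (1, a) * ∫ ω in evDA D A 1 a, Z ω ∂P) := by
  rw [cellMoment_apply, Finset.sum_product, Finset.sum_pair zero_ne_one, ← Finset.sum_add_distrib]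
  simp only [preimage_cellOf]

omit [MeasurableSpace Ω] in
lemma natCast_eq_indicator (hDbin : ∀ ω, D ω = 0 ∨ D ω = 1) (ω : Ω) :
    (D ω : ℝ) = (evD D 1).indicator 1 ω := by
  rcases hDbin ω with h | h <;> simp [evD, h]

lemma Exp_natCast_eq_Pr (hD : Measurable D) (hDbin : ∀ ω, D ω = 0 ∨ D ω = 1) :
    Exp P (fun ω => (D ω : ℝ)) = Pr P (evD D 1) := by
  simp_rw [Exp, natCast_eq_indicator hDbin]
  exact integral_indicator_one (hD (measurableSet_singleton 1))

lemma Exp_mul_natCast_eq (hDbin : ∀ ω, D ω = 0 ∨ D ω = 1) (hp : Pr P (evD D 1) ≠ 0)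
    (Z : Ω → ℝ) : Exp P (fun ω => Z ω * D ω) = Pr P (evD D 1) * CE P Z (evD D 1) := by
  simp_rw [CE, mul_div_cancel₀ _ hp, natCast_eq_indicator hDbin]
  rfl

lemma varD_eq_Pr_mul (hD : Measurable D) (hDbin : ∀ ω, D ω = 0 ∨ D ω = 1) :
    varD P D = Pr P (evD D 1) * (1 - Pr P (evD D 1)) := by
  have hDD : (fun ω => (D ω : ℝ) * D ω) = fun ω => (D ω : ℝ) :=
    funext fun ω => by rcases hDbin ω with h | h <;> simp [h]
  rw [varD, Cov, hDD, Exp_natCast_eq_Pr hD hDbin]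
  ring

lemma Pr_evD_zero_eq [IsProbabilityMeasure P] (hD : Measurable D)
    (hDbin : ∀ ω, D ω = 0 ∨ D ω = 1) : Pr P (evD D 0) = 1 - Pr P (evD D 1) := by
  have hcompl : evD D 0 = (evD D 1)ᶜ := by
    ext ω
    rcases hDbin ω with h | h <;> simp [evD, h]
  rw [hcompl]
  exact probReal_compl_eq_one_sub (hD (measurableSet_singleton 1))

lemma Pr_evA_eq_add [IsFiniteMeasure P] (hD : Measurable D) (hA : Measurable A)
    (hDbin : ∀ ω, D ω = 0 ∨ D ω = 1) (a : Fin K → ℕ) :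
    Pr P (evA A a) = Pr P (evDA D A 0 a) + Pr P (evDA D A 1 a) := by
  have hunion : evA A a = evDA D A 0 a ∪ evDA D A 1 a := by
    ext ω
    rcases hDbin ω with h | h <;> simp [evA, evDA, h]
  rw [hunion]
  exact measureReal_union (Set.disjoint_left.2 fun ω h0 h1 => by simp_all [evDA])
    (measurableSet_evDA hD hA 1 a)

lemma posDef_varWmat (hPD : (covDADmat P D A).PosDef) : (varWmat P D A).PosDef :=
  hPD.submatrix Sum.inr_injective

lemma Minter_vecMul_varWmat (hPD : (covDADmat P D A).PosDef) :
    Minter P D A ᵥ* varWmat P D A = covDW P D A := by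
  have hdet : IsUnit (varWmat P D A).det :=
    (isUnit_iff_isUnit_det _).mp (posDef_varWmat hPD).isUnit
  change covDW P D A ᵥ* (varWmat P D A)⁻¹ ᵥ* varWmat P D A = _
  rw [vecMul_vecMul, nonsing_inv_mul _ hdet, vecMul_one]

lemma denomI_pos (hPD : (covDADmat P D A).PosDef) : 0 < denomI P D A := by
  have h21 : ∀ u, (covDADmat P D A).toBlocks₂₁ u () = covDW P D A u := fun _ => Cov_comm _ _ _
  refine (hPD.schur_complement₂₂.diag_pos (i := ())).trans_eq ?_
  simp only [denomI, Minter, Matrix.sub_apply, mul_apply, h21, Finset.sum_mul]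
  rfl

lemma residTreat_apply [IsProbabilityMeasure P] (hD : Measurable D) (hA : Measurable A)
    (hDbin : ∀ ω, D ω = 0 ∨ D ω = 1) (hAsupp : ∀ ω, A ω ∈ 𝒜) (hp : Pr P (evD D 1) ≠ 0)
    (d : ℕ) (a : Fin K → ℕ) :
    residTreat P D A 𝒜 (d, a) = d - Pr P (evD D 1)
      - ∑ j, Minter P D A (Sum.inl j) * ((a j : ℝ) - Exp P (fun ω => (A ω j : ℝ)))
      - ∑ j, Minter P D A (Sum.inr j) * ((a j : ℝ) * d - Pr P (evD D 1) * condA1 P D A j) := by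
  have hE : ∀ g, cellMoment P (cellOf D A) (({0, 1} : Finset ℕ) ×ˢ 𝒜) 1 g
      = Exp P (fun ω => g (cellOf D A ω)) :=
    fun g =>
      (integral_comp_eq_cellMoment (measurable_cellOf hD hA) (cellOf_mem hDbin hAsupp) g).symm
  simp only [residTreat, partialOut, hE, Pi.sub_apply, Pi.add_apply, Finset.sum_apply,
    Pi.smul_apply, smul_eq_mul, Pi.algebraMap_apply, Algebra.algebraMap_self, RingHom.id_apply,
    Fintype.sum_sum_type, dCell, wCell, cellOf, Sum.elim_inl, Sum.elim_inr]
  rw [Exp_natCast_eq_Pr hD hDbin]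
  simp only [Exp_mul_natCast_eq hDbin hp, condA1]
  ring

lemma wdceI_eq [IsProbabilityMeasure P] (hD : Measurable D) (hA : Measurable A)
    (hDbin : ∀ ω, D ω = 0 ∨ D ω = 1) (hAsupp : ∀ ω, A ω ∈ 𝒜) (hp : Pr P (evD D 1) ≠ 0)
    (a : Fin K → ℕ) :
    wdceI P D A a = Pr P (evDA D A 1 a) * residTreat P D A 𝒜 (1, a) / denomI P D A := by
  rw [wdceI, piP, residTreat_apply hD hA hDbin hAsupp hp, varD_eq_Pr_mul hD hDbin]
  simp only [Nat.cast_one, mul_one]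
  field_simp

lemma windI_eq [IsProbabilityMeasure P] (hD : Measurable D) (hA : Measurable A)
    (hDbin : ∀ ω, D ω = 0 ∨ D ω = 1) (hAsupp : ∀ ω, A ω ∈ 𝒜) (hp : Pr P (evD D 1) ≠ 0)
    (hp' : 1 - Pr P (evD D 1) ≠ 0) (a : Fin K → ℕ) :
    windI P D A a = (Pr P (evDA D A 0 a) * residTreat P D A 𝒜 (0, a)
      + Pr P (evDA D A 1 a) * residTreat P D A 𝒜 (1, a)) / denomI P D A := by
  rw [windI, piP, piP, residTreat_apply hD hA hDbin hAsupp hp,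
    residTreat_apply hD hA hDbin hAsupp hp, varD_eq_Pr_mul hD hDbin, Pr_evD_zero_eq hD hDbin,
    Pr_evA_eq_add hD hA hDbin]
  simp only [Nat.cast_zero, Nat.cast_one, mul_zero, mul_one, zero_sub]
  set p := Pr P (evD D 1)
  set q₀ := Pr P (evDA D A 0 a)
  set q₁ := Pr P (evDA D A 1 a)
  have hinl : ∑ j, Minter P D A (Sum.inl j) * (q₀ + q₁) * ((a j : ℝ) - Exp P fun ω => (A ω j : ℝ))
      = (q₀ + q₁) * ∑ j, Minter P D A (Sum.inl j) * ((a j : ℝ) - Exp P fun ω => (A ω j : ℝ)) := by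
    rw [Finset.mul_sum]
    exact Finset.sum_congr rfl fun j _ => by ring
  have hinr : p * ∑ j, Minter P D A (Sum.inr j) * (q₁ / p * a j - (q₀ + q₁) * condA1 P D A j)
      = q₀ * ∑ j, Minter P D A (Sum.inr j) * -(p * condA1 P D A j)
        + q₁ * ∑ j, Minter P D A (Sum.inr j) * (a j - p * condA1 P D A j) := by
    simp only [Finset.mul_sum, ← Finset.sum_add_distrib]
    exact Finset.sum_congr rfl fun j _ => by field_simp; ring
  rw [hinl, hinr]
  field_simp
  ring

omit [MeasurableSpace Ω] in
lemma Yobs_eq (hDbin : ∀ ω, D ω = 0 ∨ D ω = 1) (hAsupp : ∀ ω, A ω ∈ 𝒜) (ω : Ω) :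
    Yobs D A 𝒜 Ypot ω = Ypot (D ω) (A ω) ω := by
  have hd : D ω ∈ ({0, 1} : Finset ℕ) := by rcases hDbin ω with h | h <;> simp [h]
  rw [Yobs, Finset.sum_eq_single_of_mem _ hd, Finset.sum_eq_single_of_mem _ (hAsupp ω)]
  · simp
  · intro a _ ha
    simp [Ne.symm ha]
  · intro d _ hd'
    exact Finset.sum_eq_zero fun a _ => by simp [Ne.symm hd']

lemma integrable_Yobs (hD : Measurable D) (hA : Measurable A)
    (hInt : ∀ d ∈ ({0, 1} : Finset ℕ), ∀ a ∈ 𝒜, Integrable (Ypot d a) P) :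
    Integrable (Yobs D A 𝒜 Ypot) P := by
  refine integrable_finsetSum _ fun d hd => integrable_finsetSum _ fun a ha => ?_
  have hcell : (fun ω => Ypot d a ω * if D ω = d ∧ A ω = a then 1 else 0)
      = (evDA D A d a).indicator (Ypot d a) := by
    ext ω
    by_cases h : D ω = d ∧ A ω = a <;> simp [evDA, h]
  rw [hcell]
  exact (hInt d hd a ha).indicator (measurableSet_evDA hD hA d a)

lemma setIntegral_Yobs (hD : Measurable D) (hA : Measurable A) (hDbin : ∀ ω, D ω = 0 ∨ D ω = 1)
    (hAsupp : ∀ ω, A ω ∈ 𝒜) (d : ℕ) (a : Fin K → ℕ) :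
    ∫ ω in evDA D A d a, Yobs D A 𝒜 Ypot ω ∂P = ∫ ω in evDA D A d a, Ypot d a ω ∂P :=
  setIntegral_congr_fun (measurableSet_evDA hD hA d a) fun ω hω => by
    rw [Yobs_eq hDbin hAsupp, hω.1, hω.2]

omit [MeasurableSpace Ω] in
lemma residInter_eq (Δ θ₀ : ℝ) (θ lam : Fin K → ℝ) (ω : Ω) :
    residInter D A 𝒜 Ypot Δ θ₀ θ lam ω
      = Yobs D A 𝒜 Ypot ω - fitInter Δ θ₀ θ lam (cellOf D A ω) := by
  simp only [residInter, fitInter, Pi.add_apply, Pi.smul_apply, Finset.sum_apply,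
    Pi.algebraMap_apply, Algebra.algebraMap_self, RingHom.id_apply, Fintype.sum_sum_type,
    dCell, wCell, cellOf, Sum.elim_inl, Sum.elim_inr, smul_eq_mul, mul_assoc]
  ring

lemma cellMoment_Yobs_eq_of_orthogonal [IsProbabilityMeasure P] (hD : Measurable D)
    (hA : Measurable A) (hDbin : ∀ ω, D ω = 0 ∨ D ω = 1) (hAsupp : ∀ ω, A ω ∈ 𝒜)
    (hInt : ∀ d ∈ ({0, 1} : Finset ℕ), ∀ a ∈ 𝒜, Integrable (Ypot d a) P)
    {Δ θ₀ : ℝ} {θ lam : Fin K → ℝ} {g : ℕ × (Fin K → ℕ) → ℝ}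
    (hg : Exp P (fun ω => residInter D A 𝒜 Ypot Δ θ₀ θ lam ω * g (cellOf D A ω)) = 0) :
    cellMoment P (cellOf D A) (({0, 1} : Finset ℕ) ×ˢ 𝒜) (Yobs D A 𝒜 Ypot) g
      = cellMoment P (cellOf D A) (({0, 1} : Finset ℕ) ×ˢ 𝒜) 1 (fitInter Δ θ₀ θ lam * g) := by
  have h := integral_sub_comp_mul_comp_eq (measurable_cellOf hD hA) (cellOf_mem hDbin hAsupp)
    (integrable_Yobs hD hA hInt) (fitInter Δ θ₀ θ lam) g
  simp only [← residInter_eq] at h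
  rw [← sub_eq_zero, ← h]
  exact hg

theorem cellMoment_Yobs_residTreat_eq [IsProbabilityMeasure P] (hD : Measurable D)
    (hA : Measurable A) (hDbin : ∀ ω, D ω = 0 ∨ D ω = 1) (hAsupp : ∀ ω, A ω ∈ 𝒜)
    (hInt : ∀ d ∈ ({0, 1} : Finset ℕ), ∀ a ∈ 𝒜, Integrable (Ypot d a) P)
    (hPD : (covDADmat P D A).PosDef) {Δ θ₀ : ℝ} {θ lam : Fin K → ℝ}
    (hO1 : Exp P (residInter D A 𝒜 Ypot Δ θ₀ θ lam) = 0)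
    (hO2 : Exp P (fun ω => residInter D A 𝒜 Ypot Δ θ₀ θ lam ω * (D ω : ℝ)) = 0)
    (hO3 : ∀ j : Fin K, Exp P (fun ω => residInter D A 𝒜 Ypot Δ θ₀ θ lam ω * (A ω j : ℝ)) = 0)
    (hO4 : ∀ j : Fin K,
      Exp P (fun ω => residInter D A 𝒜 Ypot Δ θ₀ θ lam ω * (A ω j : ℝ) * (D ω : ℝ)) = 0) :
    cellMoment P (cellOf D A) (({0, 1} : Finset ℕ) ×ˢ 𝒜) (Yobs D A 𝒜 Ypot) (residTreat P D A 𝒜)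
      = Δ * denomI P D A := by
  have hX := measurable_cellOf hD hA
  have hS := cellOf_mem hDbin hAsupp
  set E := cellMoment P (cellOf D A) (({0, 1} : Finset ℕ) ×ˢ 𝒜) 1
  have hcovW : ∀ u v, varWmat P D A u v = linCov E (wCell u) (wCell v) := fun u v => by
    simp only [varWmat, of_apply, Wvec_eq_comp, Cov_comp hX hS, E]
  have hcovD : ∀ g, Cov P (fun ω => (D ω : ℝ)) (fun ω => g (cellOf D A ω)) = linCov E dCell g :=
    Cov_comp hX hS dCell
  have hM : ∀ v, ∑ u, Minter P D A u * linCov E (wCell u) (wCell v)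
      = linCov E dCell (wCell v) := fun v => by
    simpa only [vecMul, dotProduct, hcovW, covDW, Wvec_eq_comp, hcovD]
      using congrFun (Minter_vecMul_varWmat hPD) v
  have hden : linCov E dCell dCell - ∑ u, Minter P D A u * linCov E (wCell u) dCell
      = denomI P D A := by
    have hvarD : varD P D = linCov E dCell dCell := hcovD dCell
    simp only [denomI, hvarD, covDW, Wvec_eq_comp, hcovD, linCov_comm E (wCell _)]
  have horth := fun g => cellMoment_Yobs_eq_of_orthogonal (Δ := Δ) (θ₀ := θ₀) (θ := θ)
    (lam := lam) (g := g) hD hA hDbin hAsupp hInt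
  rw [← hden]
  refine frisch_waugh_lovell (cellMoment_one_one hX hS) hM Δ θ₀ (Sum.elim θ lam)
    ((horth 1 (by simpa using hO1)).trans (by rw [mul_one]; rfl)) (horth dCell hO2)
    fun v => horth _ ?_
  cases v with
  | inl j => exact hO3 j
  | inr j =>
    have h := hO4 j
    simp only [mul_assoc] at h
    exact h

lemma sum_windI [IsProbabilityMeasure P] (hD : Measurable D) (hA : Measurable A)
    (hDbin : ∀ ω, D ω = 0 ∨ D ω = 1) (hAsupp : ∀ ω, A ω ∈ 𝒜) (hp : Pr P (evD D 1) ≠ 0)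
    (hp' : 1 - Pr P (evD D 1) ≠ 0) : ∑ a ∈ 𝒜, windI P D A a = 0 := by
  have h : cellMoment P (cellOf D A) (({0, 1} : Finset ℕ) ×ˢ 𝒜) 1 (residTreat P D A 𝒜) = 0 :=
    apply_partialOut (cellMoment_one_one (measurable_cellOf hD hA) (cellOf_mem hDbin hAsupp))
  rw [cellMoment_cellOf_apply] at h
  simp only [Pi.one_apply, setIntegral_const, smul_eq_mul, mul_one] at h
  rw [Finset.sum_congr rfl fun a _ => windI_eq hD hA hDbin hAsupp hp hp' a, ← Finset.sum_div]
  refine div_eq_zero_iff.2 (Or.inl (h ▸ Finset.sum_congr rfl fun a _ => ?_))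
  rw [mul_comm, mul_comm (Pr P _)]
  rfl

lemma decomposition_term_eq [IsProbabilityMeasure P] (hD : Measurable D) (hA : Measurable A)
    (hDbin : ∀ ω, D ω = 0 ∨ D ω = 1) (hAsupp : ∀ ω, A ω ∈ 𝒜)
    (hInt : ∀ d ∈ ({0, 1} : Finset ℕ), ∀ a ∈ 𝒜, Integrable (Ypot d a) P)
    (hp : Pr P (evD D 1) ≠ 0) (hp' : 1 - Pr P (evD D 1) ≠ 0) (hden : denomI P D A ≠ 0)
    {a : Fin K → ℕ} (ha : a ∈ 𝒜) (hq₀ : Pr P (evDA D A 0 a) ≠ 0)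
    (hq₁ : Pr P (evDA D A 1 a) ≠ 0) :
    wdceI P D A a * CE P (fun ω => Ypot 1 a ω - Ypot 0 a ω) (evDA D A 1 a)
      + windI P D A a * (CE P (Ypot 0 a) (evDA D A 0 a) - CE P (Ypot 0 0) (evDA D A 0 0))
      + wdceI P D A a * (CE P (Ypot 0 a) (evDA D A 1 a) - CE P (Ypot 0 a) (evDA D A 0 a))
      = (residTreat P D A 𝒜 (0, a) * ∫ ω in evDA D A 0 a, Yobs D A 𝒜 Ypot ω ∂P
          + residTreat P D A 𝒜 (1, a) * ∫ ω in evDA D A 1 a, Yobs D A 𝒜 Ypot ω ∂P)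
          / denomI P D A
        - windI P D A a * CE P (Ypot 0 0) (evDA D A 0 0) := by
  rw [wdceI_eq hD hA hDbin hAsupp hp, windI_eq hD hA hDbin hAsupp hp hp',
    CE_eq_setIntegral _ _ (measurableSet_evDA hD hA 1 a),
    CE_eq_setIntegral _ _ (measurableSet_evDA hD hA 0 a),
    CE_eq_setIntegral _ _ (measurableSet_evDA hD hA 1 a),
    integral_sub (hInt 1 (by simp) a ha).integrableOn (hInt 0 (by simp) a ha).integrableOn,
    setIntegral_Yobs hD hA hDbin hAsupp, setIntegral_Yobs hD hA hDbin hAsupp]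
  field_simp
  ring

end InteractionRegression

theorem interaction_regression_decomposition_general
    (P : Measure Ω) [IsProbabilityMeasure P]
    (D : Ω → ℕ) (A : Ω → Fin K → ℕ) (𝒜 : Finset (Fin K → ℕ))
    (Ypot : ℕ → (Fin K → ℕ) → Ω → ℝ)
    (hD : Measurable D) (hA : Measurable A)
    (hDbin : ∀ ω, D ω = 0 ∨ D ω = 1)
    (hAsupp : ∀ ω, A ω ∈ 𝒜)
    (hInt : ∀ d ∈ ({0, 1} : Finset ℕ), ∀ a ∈ 𝒜, Integrable (Ypot d a) P)
    (hpos : ∀ d ∈ ({0, 1} : Finset ℕ), ∀ a ∈ 𝒜, 0 < Pr P (evDA D A d a))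
    (hPD : (covDADmat P D A).PosDef)
    (Δinter θ₀ : ℝ) (θ lam : Fin K → ℝ)
    (hO1 : Exp P (residInter D A 𝒜 Ypot Δinter θ₀ θ lam) = 0)
    (hO2 : Exp P (fun ω => residInter D A 𝒜 Ypot Δinter θ₀ θ lam ω * (D ω : ℝ)) = 0)
    (hO3 : ∀ j : Fin K, Exp P (fun ω => residInter D A 𝒜 Ypot Δinter θ₀ θ lam ω * (A ω j : ℝ)) = 0)
    (hO4 : ∀ j : Fin K,
      Exp P (fun ω => residInter D A 𝒜 Ypot Δinter θ₀ θ lam ω * (A ω j : ℝ) * (D ω : ℝ)) = 0)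
    :
    Δinter
      = (∑ a ∈ 𝒜, wdceI P D A a *
            CE P (fun ω => Ypot 1 a ω - Ypot 0 a ω) (evDA D A 1 a))
        + (∑ a ∈ 𝒜, windI P D A a *
            (CE P (Ypot 0 a) (evDA D A 0 a) - CE P (Ypot 0 0) (evDA D A 0 0)))
        + (∑ a ∈ 𝒜, wdceI P D A a *
            (CE P (Ypot 0 a) (evDA D A 1 a) - CE P (Ypot 0 a) (evDA D A 0 a))) := by
  have hvar : 0 < Pr P (evD D 1) * (1 - Pr P (evD D 1)) :=
    varD_eq_Pr_mul hD hDbin ▸ hPD.diag_pos (i := Sum.inl ())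
  have hp := left_ne_zero_of_mul hvar.ne'
  have hp' := right_ne_zero_of_mul hvar.ne'
  have hden := (denomI_pos hPD).ne'
  have hcell := cellMoment_Yobs_residTreat_eq hD hA hDbin hAsupp hInt hPD hO1 hO2 hO3 hO4
  rw [cellMoment_cellOf_apply] at hcell
  rw [← Finset.sum_add_distrib, ← Finset.sum_add_distrib,
    Finset.sum_congr rfl fun a ha => decomposition_term_eq hD hA hDbin hAsupp hInt hp hp' hden ha
      (hpos 0 (by simp) a ha).ne' (hpos 1 (by simp) a ha).ne',
    Finset.sum_sub_distrib, ← Finset.sum_mul, sum_windI hD hA hDbin hAsupp hp hp', zero_mul,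
    sub_zero, ← Finset.sum_div, hcell, mul_div_cancel_right₀ _ hden]

/-- Interaction regression, general decomposition (Theorem B.4 / thm:inter_pre). -/
theorem interaction_regression_decomposition
    (P : Measure Ω) [IsProbabilityMeasure P]
    (D : Ω → ℕ) (A : Ω → Fin K → ℕ) (𝒜 : Finset (Fin K → ℕ))
    (Ypot : ℕ → (Fin K → ℕ) → Ω → ℝ)
    (hD : Measurable D) (hA : Measurable A)
    (hDbin : ∀ ω, D ω = 0 ∨ D ω = 1)
    (hAsupp : ∀ ω, A ω ∈ 𝒜) (h𝒜0 : (0 : Fin K → ℕ) ∈ 𝒜)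
    (hInt : ∀ d ∈ ({0, 1} : Finset ℕ), ∀ a ∈ 𝒜, Integrable (Ypot d a) P)
    (hpos : ∀ d ∈ ({0, 1} : Finset ℕ), ∀ a ∈ 𝒜, 0 < Pr P (evDA D A d a))
    (hPD : (covDADmat P D A).PosDef)
    (Δinter θ₀ : ℝ) (θ lam : Fin K → ℝ)
    (hO1 : Exp P (residInter D A 𝒜 Ypot Δinter θ₀ θ lam) = 0)
    (hO2 : Exp P (fun ω => residInter D A 𝒜 Ypot Δinter θ₀ θ lam ω * (D ω : ℝ)) = 0)
    (hO3 : ∀ j : Fin K, Exp P (fun ω => residInter D A 𝒜 Ypot Δinter θ₀ θ lam ω * (A ω j : ℝ)) = 0)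
    (hO4 : ∀ j : Fin K,
      Exp P (fun ω => residInter D A 𝒜 Ypot Δinter θ₀ θ lam ω * (A ω j : ℝ) * (D ω : ℝ)) = 0)
    :
    Δinter
      = (∑ a ∈ 𝒜, wdceI P D A a *
            CE P (fun ω => Ypot 1 a ω - Ypot 0 a ω) (evDA D A 1 a))
        + (∑ a ∈ 𝒜, windI P D A a *
            (CE P (Ypot 0 a) (evDA D A 0 a) - CE P (Ypot 0 0) (evDA D A 0 0)))
        + (∑ a ∈ 𝒜, wdceI P D A a *
            (CE P (Ypot 0 a) (evDA D A 1 a) - CE P (Ypot 0 a) (evDA D A 0 a))) :=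
  interaction_regression_decomposition_general P D A 𝒜 Ypot hD hA hDbin hAsupp hInt hpos hPD Δinter
    θ₀ θ lam hO1 hO2 hO3 hO4
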